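/- Let F be a field equipped with an action θ : Θ → Aut(F) of a finite group Θ, such that the order of ker(θ) is invertible in F (coprime to the characteristic exponent). Let V be an F-vector space with a Θ-action that is semilinear with respect to θ. Then H^j(Θ, V) = 0 for all j ≥ 1. -/

import Mathlib

/-!
The trace `x ↦ ∑ σ • x` on `F` is `|ker θ|` times the sum of the distinct automorphisms in the
image of `θ`, so by Dedekind's independence of characters it is nonzero and some `a ∈ F` has
trace `1`. Semilinearity then gives `∑ σ • (a • σ⁻¹ • v) = v`, which makes `V` a retract of the
coinduced module `Coind_1^Θ V` (embedding `v ↦ (g ↦ g • v)`, retraction `f ↦ ∑ σ • (a • f σ⁻¹)`),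
whose higher cohomology vanishes by Shapiro's lemma.
-/

open CategoryTheory Limits Finset

universe u

section TraceOne

variable {Θ F : Type*} [Group Θ] [Fintype Θ] [Field F] [MulSemiringAction Θ F]

lemma exists_sum_smul_ne_zero (hker : (Nat.card {σ : Θ // ∀ x : F, σ • x = x} : F) ≠ 0) :
    ∃ b : F, ∑ σ : Θ, σ • b ≠ 0 := by
  classical
  set T := MulSemiringAction.toRingAut Θ F
  have hfiber : ∀ ψ ∈ univ.image T, #{σ | T σ = ψ} = Nat.card {σ : Θ // ∀ x : F, σ • x = x} := by
    intro ψ hψ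
    rw [MonoidHom.card_fiber_eq_of_mem_range T (by simpa using hψ) ⟨1, rfl⟩,
      Nat.card_eq_fintype_card, Fintype.card_subtype]
    simp [T, RingEquiv.ext_iff]
  have hind : LinearIndependent F (fun ψ : RingAut F => (ψ : F → F)) :=
    (linearIndependent_monoidHom F F).comp RingEquiv.toMonoidHom
      fun _ _ h => RingEquiv.ext (DFunLike.congr_fun h :)
  by_contra! h0
  refine hker (linearIndependent_iff'.1 hind (univ.image T) (fun _ => _) ?_ (T 1)
    (mem_image_of_mem T (mem_univ 1)))
  funext b
  rw [Finset.sum_apply]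
  calc ∑ ψ ∈ univ.image T, (Nat.card {σ : Θ // ∀ x : F, σ • x = x} : F) • ψ b
      = ∑ ψ ∈ univ.image T, #{σ | T σ = ψ} • ψ b := by
        refine sum_congr rfl fun ψ hψ => ?_
        rw [hfiber ψ hψ, Nat.cast_smul_eq_nsmul]
    _ = ∑ σ : Θ, σ • b := (sum_comp (fun ψ : RingAut F => ψ b) T).symm
    _ = 0 := h0 b

lemma exists_sum_smul_eq_one (hker : (Nat.card {σ : Θ // ∀ x : F, σ • x = x} : F) ≠ 0) :
    ∃ a : F, ∑ σ : Θ, σ • a = 1 := by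
  obtain ⟨b, hb⟩ := exists_sum_smul_ne_zero hker
  have hfix : ∀ τ : Θ, τ • ∑ σ : Θ, σ • b = ∑ σ : Θ, σ • b := fun τ => by
    rw [smul_sum]
    exact Fintype.sum_equiv (Equiv.mulLeft τ) _ _ fun σ => (mul_smul τ σ b).symm
  refine ⟨(∑ σ : Θ, σ • b)⁻¹ * b, ?_⟩
  simp_rw [smul_mul', smul_inv'', hfix, ← mul_sum, inv_mul_cancel₀ hb]

end TraceOne

lemma sum_smul_smul_inv_smul {Θ F V : Type*} [Group Θ] [Fintype Θ] [Semiring F] [SMul Θ F]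
    [AddCommMonoid V] [Module F V] [MulAction Θ V]
    (hsemi : ∀ (σ : Θ) (c : F) (v : V), σ • (c • v) = (σ • c) • (σ • v)) (a : F) (v : V) :
    ∑ σ : Θ, σ • (a • σ⁻¹ • v) = (∑ σ : Θ, σ • a) • v := by
  simp [hsemi, sum_smul]

namespace Rep

variable {k G : Type u} [CommRing k] [Group G] [Fintype G]

noncomputable def coindBotTrace (A : Rep k G) (t : A →ₗ[k] A) :
    coind.{u, u, u, u} (⊥ : Subgroup G).subtype (res (⊥ : Subgroup G).subtype A) ⟶ A :=
  ofHom
    { toFun := fun f => ∑ g : G, A.ρ g (t (f.1 g⁻¹))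
      map_add' := fun f f' => by simp [sum_add_distrib]
      map_smul' := fun c f => by simp [smul_sum]
      isIntertwining' := fun h => by
        ext f
        change ∑ g, A.ρ g (t (f.1 (g⁻¹ * h))) = A.ρ h (∑ g, A.ρ g (t (f.1 g⁻¹)))
        rw [map_sum]
        refine (Fintype.sum_equiv (Equiv.mulLeft h) _ _ fun g => ?_).symm
        simp }

noncomputable def retractCoindBot (A : Rep k G) (t : A →ₗ[k] A)
    (ht : ∑ g : G, A.ρ g ∘ₗ t ∘ₗ A.ρ g⁻¹ = LinearMap.id) :
    Retract A (coind.{u, u, u, u} (⊥ : Subgroup G).subtype (res (⊥ : Subgroup G).subtype A)) where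
  i := resCoindToHom _ A _ (𝟙 _)
  r := coindBotTrace A t
  retract := by
    ext v
    change ∑ g, A.ρ g (t (A.ρ g⁻¹ v)) = v
    simpa using LinearMap.congr_fun ht v

end Rep

namespace groupCohomology

variable {k G : Type u} [CommRing k] [Group G]

lemma isZero_of_retract {A B : Rep k G} (h : Retract A B) {n : ℕ}
    (hB : IsZero (groupCohomology B n)) : IsZero (groupCohomology A n) :=
  IsZero.of_mono (X := (functor k G n).obj A) (h.map (functor k G n)).i hB

lemma isZero_coind_bot_succ (A : Rep k (⊥ : Subgroup G)) (n : ℕ) :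
    IsZero (groupCohomology (Rep.coind.{u, u, u, u} (⊥ : Subgroup G).subtype A) (n + 1)) :=
  (isZero_groupCohomology_succ_of_subsingleton A n).of_iso (coindIso A (n + 1))

lemma isZero_succ_of_sum_conj_eq_id [Fintype G] (A : Rep k G) (t : A →ₗ[k] A)
    (ht : ∑ g : G, A.ρ g ∘ₗ t ∘ₗ A.ρ g⁻¹ = LinearMap.id) (n : ℕ) :
    IsZero (groupCohomology A (n + 1)) :=
  isZero_of_retract (Rep.retractCoindBot A t ht) (isZero_coind_bot_succ _ n)

end groupCohomology

theorem stmt12 (Θ : Type) [Group Θ] [Finite Θ]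
    (F : Type) [Field F] [MulSemiringAction Θ F]
    (V : Type) [AddCommGroup V] [Module F V] [DistribMulAction Θ V]
    -- the action of `Θ` on `V` is semilinear with respect to the action on `F`
    (hsemi : ∀ (σ : Θ) (c : F) (v : V), σ • (c • v) = (σ • c) • (σ • v))
    -- the order of the kernel of `θ : Θ → Aut F` is invertible in `F`
    (hker : (Nat.card {σ : Θ // ∀ x : F, σ • x = x} : F) ≠ 0)
    -- the underlying `ℤ`-linear representation of `Θ` on `V`
    (ρ : Representation ℤ Θ V) (hρ : ∀ (σ : Θ) (v : V), ρ σ v = σ • v)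
    (j : ℕ) (hj : 1 ≤ j) :
    CategoryTheory.Limits.IsZero (groupCohomology (Rep.of ρ) j) := by
  cases nonempty_fintype Θ
  obtain ⟨a, ha⟩ := exists_sum_smul_eq_one hker
  obtain ⟨n, rfl⟩ := Nat.exists_eq_add_of_le' hj
  refine groupCohomology.isZero_succ_of_sum_conj_eq_id (Rep.of ρ)
    (DistribSMul.toLinearMap ℤ V a) ?_ n
  ext v
  rw [LinearMap.sum_apply]
  change ∑ σ : Θ, ρ σ (a • ρ σ⁻¹ v) = v
  simp only [hρ, sum_smul_smul_inv_smul hsemi, ha, one_smul]
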